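/- Let Φ(ω) = θ(ω) − ∫_{−∞}^{ω} e^{−π s²} ds. Then the L¹ norm of the function ω ↦ ω·Φ(ω) on ℝ equals 1/(4π). -/

import Mathlib

open MeasureTheory Real

/-- The Heaviside step function: `0` for negative argument, `1` otherwise. -/
noncomputable def heaviside (ω : ℝ) : ℝ := if 0 ≤ ω then 1 else 0

/-- `Φ(ω) = θ(ω) − ∫_{−∞}^{ω} e^{−π s²} ds`. -/
noncomputable def Phi (ω : ℝ) : ℝ :=
  heaviside ω - ∫ s in Set.Iic ω, Real.exp (-π * s ^ 2)

/-!
For `ω ≥ 0`, `Φ(ω)` is the Gaussian tail `T(ω) = ∫_ω^∞ e^{-πs²} ds`, and `Φ(-ω) = -T(ω)` by the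
symmetry of the Gaussian, so `|ω Φ(ω)| = |ω| T(|ω|)` and the `L¹` norm is `2 ∫_0^∞ x T(x) dx`.
By the layer-cake formula (Tonelli on `{0 < x < s}`) this is `∫_0^∞ s² e^{-πs²} ds`, which equals
`π^{-3/2} Γ(3/2) / 2 = 1/(4π)`.
-/

open Set

theorem lintegral_Ioi_mul_integral_Ioi {f : ℝ → ℝ} (hf : 0 ≤ f) (hfi : IntegrableOn f (Ioi 0)) :
    ∫⁻ x in Ioi 0, ENNReal.ofReal (x * ∫ s in Ioi x, f s) =
      ∫⁻ x in Ioi 0, ENNReal.ofReal (x ^ 2 * f x / 2) := by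
  let μ := (volume.restrict (Ioi (0 : ℝ))).withDensity fun s ↦ ENNReal.ofReal (f s)
  have cake := lintegral_comp_eq_lintegral_meas_lt_mul μ (f := id) (g := id)
    ((ae_restrict_of_forall_mem measurableSet_Ioi fun t ht ↦ le_of_lt ht).filter_mono
      (withDensity_absolutelyContinuous _ _).ae_le) aemeasurable_id
    (fun _ _ ↦ intervalIntegral.intervalIntegrable_id)
    (ae_restrict_of_forall_mem measurableSet_Ioi fun t ht ↦ le_of_lt ht)
  have tail : ∀ t ∈ Ioi (0 : ℝ), μ {a | t < id a} = ENNReal.ofReal (∫ s in Ioi t, f s) := by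
    intro t ht
    rw [show {a | t < id a} = Ioi t from rfl, withDensity_apply _ measurableSet_Ioi,
      Measure.restrict_restrict measurableSet_Ioi, Ioi_inter_Ioi, sup_eq_left.2 (le_of_lt ht),
      ofReal_integral_eq_lintegral_ofReal (hfi.mono_set (Ioi_subset_Ioi (le_of_lt ht)))
        (ae_of_all _ fun s ↦ hf s)]
  calc ∫⁻ x in Ioi 0, ENNReal.ofReal (x * ∫ s in Ioi x, f s)
      = ∫⁻ t in Ioi 0, μ {a | t < id a} * ENNReal.ofReal (id t) := by
        refine setLIntegral_congr_fun measurableSet_Ioi fun x hx ↦ ?_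
        rw [tail x hx, ← ENNReal.ofReal_mul (setIntegral_nonneg measurableSet_Ioi fun s _ ↦ hf s),
          mul_comm, id]
    _ = ∫⁻ x in Ioi 0, ENNReal.ofReal (f x) * ENNReal.ofReal (∫ t in 0..x, t) := by
        rw [← cake, lintegral_withDensity_eq_lintegral_mul₀ hfi.aemeasurable.ennreal_ofReal
          (by fun_prop)]
        rfl
    _ = ∫⁻ x in Ioi 0, ENNReal.ofReal (x ^ 2 * f x / 2) := by
        refine lintegral_congr fun x ↦ ?_
        rw [integral_id, ← ENNReal.ofReal_mul (hf x)]
        ring_nf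

theorem setIntegral_Ioi_mul_integral_Ioi {f : ℝ → ℝ} (hf : 0 ≤ f)
    (hfi : IntegrableOn f (Ioi 0)) (hf2 : IntegrableOn (fun x ↦ x ^ 2 * f x) (Ioi 0)) :
    ∫ x in Ioi 0, x * ∫ s in Ioi x, f s = (∫ x in Ioi 0, x ^ 2 * f x) / 2 := by
  have tail_antitoneOn : AntitoneOn (fun x ↦ ∫ s in Ioi x, f s) (Ioi 0) :=
    fun x hx _ _ hxy ↦ setIntegral_mono_set (hfi.mono_set (Ioi_subset_Ioi (le_of_lt hx)))
      (ae_of_all _ fun s ↦ hf s) (Ioi_subset_Ioi hxy).eventuallyLE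
  rw [integral_eq_lintegral_of_nonneg_ae, lintegral_Ioi_mul_integral_Ioi hf hfi,
    ← ofReal_integral_eq_lintegral_ofReal (hf2.div_const 2), integral_div, ENNReal.toReal_ofReal]
  · exact div_nonneg (setIntegral_nonneg measurableSet_Ioi fun x _ ↦
      mul_nonneg (sq_nonneg x) (hf x)) zero_le_two
  · exact ae_of_all _ fun x ↦ div_nonneg (mul_nonneg (sq_nonneg x) (hf x)) zero_le_two
  · exact ae_restrict_of_forall_mem measurableSet_Ioi fun x hx ↦
      mul_nonneg (le_of_lt hx) (setIntegral_nonneg measurableSet_Ioi fun s _ ↦ hf s)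
  · exact (aemeasurable_id.mul (aemeasurable_restrict_of_antitoneOn measurableSet_Ioi
      tail_antitoneOn)).aestronglyMeasurable

theorem integral_Ioi_sq_mul_exp_neg_pi_mul_sq :
    ∫ x in Ioi (0 : ℝ), x ^ 2 * exp (-π * x ^ 2) = 1 / (4 * π) := by
  have h := integral_rpow_mul_exp_neg_mul_rpow two_pos (by norm_num : (-1 : ℝ) < 2) pi_pos
  simp only [rpow_two] at h
  have hpow : π ^ (-(2 + 1) / 2 : ℝ) = π ^ (-1 : ℝ) / π ^ (1 / 2 : ℝ) := by
    rw [← rpow_sub pi_pos]; norm_num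
  rw [h, show ((2 : ℝ) + 1) / 2 = 1 / 2 + 1 by norm_num, Gamma_add_one one_half_pos.ne',
    Gamma_one_half_eq, sqrt_eq_rpow, hpow, rpow_neg_one]
  field_simp
  ring

noncomputable def gaussianTail (x : ℝ) : ℝ := ∫ s in Ioi x, exp (-π * s ^ 2)

lemma gaussianTail_nonneg (x : ℝ) : 0 ≤ gaussianTail x :=
  setIntegral_nonneg measurableSet_Ioi fun _ _ ↦ (exp_pos _).le

lemma integrable_exp_neg_pi_mul_sq : Integrable fun s : ℝ ↦ exp (-π * s ^ 2) :=
  integrable_exp_neg_mul_sq pi_pos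

lemma Phi_of_nonneg {ω : ℝ} (hω : 0 ≤ ω) : Phi ω = gaussianTail ω := by
  have total := intervalIntegral.integral_Iic_add_Ioi (b := ω)
    integrable_exp_neg_pi_mul_sq.integrableOn integrable_exp_neg_pi_mul_sq.integrableOn
  rw [integral_gaussian, div_self pi_ne_zero, sqrt_one] at total
  rw [Phi, heaviside, if_pos hω, gaussianTail]
  linarith

lemma Phi_of_neg {ω : ℝ} (hω : ω < 0) : Phi ω = -gaussianTail (-ω) := by
  rw [Phi, heaviside, if_neg hω.not_ge, gaussianTail, ← neg_neg ω, ← integral_comp_neg_Ioi,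
    zero_sub, neg_neg]
  simp only [neg_sq]

lemma abs_mul_Phi (ω : ℝ) : |ω * Phi ω| = |ω| * gaussianTail |ω| := by
  rcases le_or_gt 0 ω with hω | hω
  · rw [Phi_of_nonneg hω, abs_of_nonneg hω, abs_of_nonneg (mul_nonneg hω (gaussianTail_nonneg ω))]
  · rw [Phi_of_neg hω, abs_of_neg hω, mul_neg, ← neg_mul, abs_of_nonneg
      (mul_nonneg (neg_nonneg.2 hω.le) (gaussianTail_nonneg _))]

lemma integrableOn_sq_mul_exp_neg_pi_mul_sq :
    IntegrableOn (fun x : ℝ ↦ x ^ 2 * exp (-π * x ^ 2)) (Ioi 0) := by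
  simpa only [rpow_two] using
    (integrable_rpow_mul_exp_neg_mul_sq pi_pos (by norm_num : (-1 : ℝ) < 2)).integrableOn

/-- The `L¹` norm of `ω ↦ ω·Φ(ω)` on `ℝ` equals `1/(4π)`. -/
theorem stmt_1 : ∫ ω : ℝ, |ω * Phi ω| = 1 / (4 * π) := by
  calc ∫ ω : ℝ, |ω * Phi ω|
      = ∫ ω : ℝ, |ω| * gaussianTail |ω| := by simp only [abs_mul_Phi]
    _ = 2 * ∫ x in Ioi 0, x * gaussianTail x := integral_comp_abs (f := fun x ↦ x * gaussianTail x)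
    _ = ∫ x in Ioi 0, x ^ 2 * exp (-π * x ^ 2) := by
        simp only [gaussianTail]
        rw [setIntegral_Ioi_mul_integral_Ioi (fun _ ↦ (exp_pos _).le)
          integrable_exp_neg_pi_mul_sq.integrableOn integrableOn_sq_mul_exp_neg_pi_mul_sq]
        ring
    _ = 1 / (4 * π) := integral_Ioi_sq_mul_exp_neg_pi_mul_sq
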